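/- arXiv:2106.08057 — 7 statements merged into one kernel-verified Lean document; each statement's English description precedes it below -/
import Mathlib

section
/- For integers k,l ≥ 1 with kl ≥ 4, define the (k,l)-sequence by a_0 = 0, a_1 = 1, a_{2n} = l·a_{2n-1} − a_{2n-2}, and a_{2n+1} = k·a_{2n} − a_{2n-1} for all n. Then for all n ≥ 0, a^{(k,l)}_{2n} = l·a^{(kl-2,kl-2)}_n and a^{(k,l)}_{2n+1} = a^{(kl-2,kl-2)}_{n+1} + a^{(kl-2,kl-2)}_n, where a^{(m,m)} denotes the (m,m)-sequence defined by the same recursion with k = l = m. -/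
section KLSequence

variable {R : Type*} [CommRing R] {k l : R} {a b : ℕ → R} {n : ℕ}

theorem kl_seq_even_succ (haeven : ∀ n : ℕ, a (2 * n + 2) = l * a (2 * n + 1) - a (2 * n))
    (hev : a (2 * n) = l * b n) (hodd : a (2 * n + 1) = b (n + 1) + b n) :
    a (2 * (n + 1)) = l * b (n + 1) := by
  rw [Nat.mul_succ, haeven n, hev, hodd]
  ring

theorem kl_seq_odd_succ (haodd : ∀ n : ℕ, a (2 * n + 3) = k * a (2 * n + 2) - a (2 * n + 1))
    (hbrec : ∀ n : ℕ, b (n + 2) = (k * l - 2) * b (n + 1) - b n)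
    (hev : a (2 * (n + 1)) = l * b (n + 1)) (hodd : a (2 * n + 1) = b (n + 1) + b n) :
    a (2 * (n + 1) + 1) = b (n + 1 + 1) + b (n + 1) := by
  rw [Nat.mul_succ] at hev ⊢
  rw [haodd n, hev, hodd, hbrec n]
  ring

end KLSequence

theorem kl_seq_eq_klminus2_seq_general
    (k l : ℤ)
    (a b : ℕ → ℤ)
    (ha0 : a 0 = 0) (ha1 : a 1 = 1)
    (haeven : ∀ n : ℕ, a (2 * n + 2) = l * a (2 * n + 1) - a (2 * n))
    (haodd : ∀ n : ℕ, a (2 * n + 3) = k * a (2 * n + 2) - a (2 * n + 1))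
    (hb0 : b 0 = 0) (hb1 : b 1 = 1)
    (hbrec : ∀ n : ℕ, b (n + 2) = (k * l - 2) * b (n + 1) - b n) :
    ∀ n : ℕ, a (2 * n) = l * b n ∧ a (2 * n + 1) = b (n + 1) + b n := by
  intro n
  induction n with
  | zero => simp [ha0, ha1, hb0, hb1]
  | succ n ih =>
    have hev := kl_seq_even_succ haeven ih.1 ih.2
    exact ⟨hev, kl_seq_odd_succ haodd hbrec hev ih.2⟩

/-- relation between the (k,l)-sequence and the (kl-2)-sequence. -/
theorem kl_seq_eq_klminus2_seq
    (k l : ℤ) (hk : 1 ≤ k) (hl : 1 ≤ l) (hkl : 4 ≤ k * l)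
    (a b : ℕ → ℤ)
    (ha0 : a 0 = 0) (ha1 : a 1 = 1)
    (haeven : ∀ n : ℕ, a (2 * n + 2) = l * a (2 * n + 1) - a (2 * n))
    (haodd : ∀ n : ℕ, a (2 * n + 3) = k * a (2 * n + 2) - a (2 * n + 1))
    (hb0 : b 0 = 0) (hb1 : b 1 = 1)
    (hbrec : ∀ n : ℕ, b (n + 2) = (k * l - 2) * b (n + 1) - b n) :
    ∀ n : ℕ, a (2 * n) = l * b n ∧ a (2 * n + 1) = b (n + 1) + b n :=
  kl_seq_eq_klminus2_seq_general k l a b ha0 ha1 haeven haodd hb0 hb1 hbrec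
end

section
/- For integers k,l ≥ 1 with kl ≥ 4, the (k,l)-sequence satisfies a^{(k,l)}_{2n-1} = a^{(l,k)}_{2n-1} and k·a^{(k,l)}_{2n} = l·a^{(l,k)}_{2n} for all n ≥ 0. -/
/-!
The invariant `a (2n+1) = a' (2n+1)`, `k * a (2n) = l * a' (2n)` propagates through one
period of the recursion: multiplying the even step of `a` by `k` and the even step of `a'` by `l`
gives the same combination `k * l * a (2n+1) - k * a (2n)`, and the odd steps then agree term by term.
-/

namespace KLSeq

variable {R : Type*} [CommRing R] {k l : R} {a a' : ℕ → R} {n : ℕ}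

theorem mul_even_succ_eq
    (haeven : a (2 * n + 2) = l * a (2 * n + 1) - a (2 * n))
    (ha'even : a' (2 * n + 2) = k * a' (2 * n + 1) - a' (2 * n))
    (hodd : a (2 * n + 1) = a' (2 * n + 1)) (heven : k * a (2 * n) = l * a' (2 * n)) :
    k * a (2 * n + 2) = l * a' (2 * n + 2) := by
  rw [haeven, ha'even, mul_sub, mul_sub, heven, hodd]
  ring

theorem odd_succ_eq
    (haodd : a (2 * n + 3) = k * a (2 * n + 2) - a (2 * n + 1))
    (ha'odd : a' (2 * n + 3) = l * a' (2 * n + 2) - a' (2 * n + 1))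
    (hodd : a (2 * n + 1) = a' (2 * n + 1)) (heven : k * a (2 * n + 2) = l * a' (2 * n + 2)) :
    a (2 * n + 3) = a' (2 * n + 3) := by
  rw [haodd, ha'odd, heven, hodd]

end KLSeq

theorem kl_seq_symm_general
    (k l : ℤ)
    (a a' : ℕ → ℤ)
    (ha0 : a 0 = 0) (ha1 : a 1 = 1)
    (haeven : ∀ n : ℕ, a (2 * n + 2) = l * a (2 * n + 1) - a (2 * n))
    (haodd : ∀ n : ℕ, a (2 * n + 3) = k * a (2 * n + 2) - a (2 * n + 1))
    (ha'0 : a' 0 = 0) (ha'1 : a' 1 = 1)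
    (ha'even : ∀ n : ℕ, a' (2 * n + 2) = k * a' (2 * n + 1) - a' (2 * n))
    (ha'odd : ∀ n : ℕ, a' (2 * n + 3) = l * a' (2 * n + 2) - a' (2 * n + 1)) :
    ∀ n : ℕ, a (2 * n + 1) = a' (2 * n + 1) ∧ k * a (2 * n) = l * a' (2 * n) := by
  intro n
  induction n with
  | zero => simp [ha0, ha1, ha'0, ha'1]
  | succ n ih =>
    obtain ⟨hodd, heven⟩ := ih
    have heven' := KLSeq.mul_even_succ_eq (haeven n) (ha'even n) hodd heven
    exact ⟨KLSeq.odd_succ_eq (haodd n) (ha'odd n) hodd heven', heven'⟩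

/-- symmetry between the (k,l)-sequence and the (l,k)-sequence. -/
theorem kl_seq_symm
    (k l : ℤ) (hk : 1 ≤ k) (hl : 1 ≤ l) (hkl : 4 ≤ k * l)
    (a a' : ℕ → ℤ)
    (ha0 : a 0 = 0) (ha1 : a 1 = 1)
    (haeven : ∀ n : ℕ, a (2 * n + 2) = l * a (2 * n + 1) - a (2 * n))
    (haodd : ∀ n : ℕ, a (2 * n + 3) = k * a (2 * n + 2) - a (2 * n + 1))
    (ha'0 : a' 0 = 0) (ha'1 : a' 1 = 1)
    (ha'even : ∀ n : ℕ, a' (2 * n + 2) = k * a' (2 * n + 1) - a' (2 * n))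
    (ha'odd : ∀ n : ℕ, a' (2 * n + 3) = l * a' (2 * n + 2) - a' (2 * n + 1)) :
    ∀ n : ℕ, a (2 * n + 1) = a' (2 * n + 1) ∧ k * a (2 * n) = l * a' (2 * n) :=
  kl_seq_symm_general k l a a' ha0 ha1 haeven haodd ha'0 ha'1 ha'even ha'odd
end

section
/- For integers k,l ≥ 1 with kl ≥ 4 and all integers n,m, the (k,l)-sequence satisfies the cross identity a^{(l,k)}_{2n-1}·a^{(k,l)}_m − a^{(k,l)}_{2n}·a^{(l,k)}_{m-1} = a^{(k,l)}_{2n-m}. -/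
/-!
Both the (k,l)-sequence `a` and, after the shift `m ↦ m - 1`, the (l,k)-sequence `a'` satisfy
the three-term recurrence `x (m + 1) = c m * x m - x (m - 1)` whose coefficient `c m` is `k`
at even and `l` at odd `m`. Since `c (2n - m) = c m`, so does `m ↦ a (2n - m)`. A solution is
determined by two consecutive values, and both sides of the identity agree at `m = 0` and
`m = 1`; at `m = 1` this needs `a' (2n - 1) = a (2n - 1)`, which holds because the odd-indexed
terms of either sequence satisfy `y (t + 1) = (k l - 2) y t - y (t - 1)` with the same start.
-/

def alt {R : Type*} (k l : R) (t : ℤ) : R := if Even t then k else l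

section Alt

variable {R : Type*} (k l : R) (t : ℤ)

lemma alt_add_one : alt k l (t + 1) = alt l k t := by
  by_cases ht : Even t <;> simp [alt, ht]

lemma alt_sub_one : alt k l (t - 1) = alt l k t := by
  by_cases ht : Even t <;> simp [alt, ht]

lemma alt_two_mul_sub (n : ℤ) : alt k l (2 * n - t) = alt k l t := by
  by_cases ht : Even t <;> simp [alt, Int.even_sub, ht]

lemma alt_mul_alt_add_one [CommMagma R] : alt k l t * alt k l (t + 1) = k * l := by
  rw [alt_add_one]
  by_cases ht : Even t <;> simp [alt, ht, mul_comm]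

end Alt

def SatisfiesRec {R : Type*} [Ring R] (c x : ℤ → R) : Prop :=
  ∀ t, x (t + 1) = c t * x t - x (t - 1)

lemma satisfiesRec_alt {R : Type*} [Ring R] {k l : R} {x : ℤ → R}
    (heven : ∀ n : ℤ, x (2 * n) = l * x (2 * n - 1) - x (2 * n - 2))
    (hodd : ∀ n : ℤ, x (2 * n + 1) = k * x (2 * n) - x (2 * n - 1)) :
    SatisfiesRec (alt k l) x := fun t => by
  obtain ⟨n, rfl | rfl⟩ := Int.even_or_odd' t
  · simpa [alt] using hodd n
  · have ht : ¬Even (2 * n + 1) := Int.not_even_iff_odd.mpr (odd_two_mul_add_one n)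
    simpa [alt, ht, mul_add, add_assoc, add_sub_assoc] using heven (n + 1)

namespace SatisfiesRec

section Ring

variable {R : Type*} [Ring R] {c x y : ℤ → R}

lemma apply_eq (hx : SatisfiesRec c x) {i j k : ℤ} (hi : i = j + 1) (hk : k = j - 1) :
    x i = c j * x j - x k := by
  subst hi hk; exact hx j

lemma apply_sub_one (hx : SatisfiesRec c x) (t : ℤ) : x (t - 1) = c t * x t - x (t + 1) := by
  rw [hx t]; abel

lemma apply_neg_one (hx : SatisfiesRec c x) : x (-1) = c 0 * x 0 - x 1 := by
  simpa using hx.apply_sub_one 0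

lemma ext (hx : SatisfiesRec c x) (hy : SatisfiesRec c y) (h0 : x 0 = y 0) (h1 : x 1 = y 1) :
    x = y := by
  suffices h : ∀ t : ℤ, x t = y t ∧ x (t + 1) = y (t + 1) from funext fun t => (h t).1
  intro t
  induction t using Int.induction_on with
  | zero => exact ⟨h0, by simpa using h1⟩
  | succ i ih => exact ⟨ih.2, by rw [hx, hy, add_sub_cancel_right, ih.1, ih.2]⟩
  | pred i ih =>
    refine ⟨?_, by simpa using ih.1⟩
    rw [hx.apply_sub_one, hy.apply_sub_one, ih.1, ih.2]

lemma sub (hx : SatisfiesRec c x) (hy : SatisfiesRec c y) :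
    SatisfiesRec c (fun t => x t - y t) := fun t => by
  simp only [hx t, hy t]; noncomm_ring

lemma comp_sub_one (hx : SatisfiesRec c x) :
    SatisfiesRec (fun t => c (t - 1)) (fun t => x (t - 1)) := fun t =>
  hx.apply_eq (by ring) (by ring)

lemma comp_const_sub (hx : SatisfiesRec c x) (s : ℤ) :
    SatisfiesRec (fun t => c (s - t)) (fun t => x (s - t)) := fun t => by
  dsimp only
  rw [show s - (t + 1) = s - t - 1 by ring, show s - (t - 1) = s - t + 1 by ring]
  exact hx.apply_sub_one _

end Ring

section CommRing

variable {R : Type*} [CommRing R] {k l : R} {c x y : ℤ → R}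

lemma const_mul (hx : SatisfiesRec c x) (u : R) :
    SatisfiesRec c (fun t => u * x t) := fun t => by
  dsimp only; rw [hx t]; ring

/-- Eliminate `x (u ± 1)`, `u = 2 t + s`, by the recurrence at `u` and `u ± 1`; the coefficients
at `u ± 1` agree. -/
lemma comp_two_mul_add (hx : SatisfiesRec (alt k l) x) (s : ℤ) :
    SatisfiesRec (fun _ => k * l - 2) (fun t => x (2 * t + s)) := fun t => by
  dsimp only
  set u := 2 * t + s
  have h₁ := hx.apply_eq (i := 2 * (t + 1) + s) (j := u + 1) (k := u) (by ring) (by ring)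
  have h₂ := hx u
  have h₃ := hx.apply_eq (i := u) (j := u - 1) (k := 2 * (t - 1) + s) (by ring) (by ring)
  have hc : alt k l (u - 1) = alt k l (u + 1) := by rw [alt_sub_one, alt_add_one]
  rw [hc] at h₃
  linear_combination h₁ + alt k l (u + 1) * h₂ + h₃ + x u * alt_mul_alt_add_one k l u

/-- The odd-indexed terms of `x` and `y` solve the same recurrence with coefficient `k l - 2`,
and `x (-1) = -x 1 = y (-1)`. -/
lemma apply_two_mul_sub_one_eq_of_alt_swap (hx : SatisfiesRec (alt k l) x)
    (hy : SatisfiesRec (alt l k) y) (hx0 : x 0 = 0) (hy0 : y 0 = 0) (h1 : x 1 = y 1) (t : ℤ) :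
    x (2 * t - 1) = y (2 * t - 1) := by
  have hy' := hy.comp_two_mul_add (-1)
  rw [mul_comm l k] at hy'
  have hxy := (hx.comp_two_mul_add (-1)).ext hy' ?_ ?_
  · simpa [sub_eq_add_neg] using congrFun hxy t
  · simp only [mul_zero, zero_add]
    rw [hx.apply_neg_one, hy.apply_neg_one, hx0, hy0, h1, mul_zero, mul_zero]
  · norm_num [h1]

end CommRing

end SatisfiesRec

theorem kl_seq_cross_even_general
    (k l : ℤ)
    (a a' : ℤ → ℤ)
    (ha0 : a 0 = 0) (ha1 : a 1 = 1)
    (haeven : ∀ n : ℤ, a (2 * n) = l * a (2 * n - 1) - a (2 * n - 2))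
    (haodd : ∀ n : ℤ, a (2 * n + 1) = k * a (2 * n) - a (2 * n - 1))
    (ha'0 : a' 0 = 0) (ha'1 : a' 1 = 1)
    (ha'even : ∀ n : ℤ, a' (2 * n) = k * a' (2 * n - 1) - a' (2 * n - 2))
    (ha'odd : ∀ n : ℤ, a' (2 * n + 1) = l * a' (2 * n) - a' (2 * n - 1)) :
    ∀ n m : ℤ, a' (2 * n - 1) * a m - a (2 * n) * a' (m - 1) = a (2 * n - m) := by
  intro n m
  have hA : SatisfiesRec (alt k l) a := satisfiesRec_alt haeven haodd
  have hA' : SatisfiesRec (alt l k) a' := satisfiesRec_alt ha'even ha'odd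
  have hodd : a' (2 * n - 1) = a (2 * n - 1) :=
    hA'.apply_two_mul_sub_one_eq_of_alt_swap hA ha'0 ha0 (ha'1.trans ha1.symm) n
  have hA'_shift : SatisfiesRec (alt k l) fun m => a' (m - 1) := by
    simpa only [alt_sub_one] using hA'.comp_sub_one
  have hlhs : SatisfiesRec (alt k l) fun m => a' (2 * n - 1) * a m - a (2 * n) * a' (m - 1) :=
    (hA.const_mul _).sub (hA'_shift.const_mul _)
  have hrhs : SatisfiesRec (alt k l) fun m => a (2 * n - m) := by
    simpa only [alt_two_mul_sub] using hA.comp_const_sub (2 * n)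
  refine congrFun (hlhs.ext hrhs ?_ ?_) m
  · rw [zero_sub, hA'.apply_neg_one, ha0, ha'0, ha'1, sub_zero]
    ring
  · simp [ha1, ha'0, hodd]

/-- cross identity for the two-sided (k,l)-sequence. -/
theorem kl_seq_cross_even
    (k l : ℤ) (hk : 1 ≤ k) (hl : 1 ≤ l) (hkl : 4 ≤ k * l)
    (a a' : ℤ → ℤ)
    (ha0 : a 0 = 0) (ha1 : a 1 = 1)
    (haeven : ∀ n : ℤ, a (2 * n) = l * a (2 * n - 1) - a (2 * n - 2))
    (haodd : ∀ n : ℤ, a (2 * n + 1) = k * a (2 * n) - a (2 * n - 1))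
    (ha'0 : a' 0 = 0) (ha'1 : a' 1 = 1)
    (ha'even : ∀ n : ℤ, a' (2 * n) = k * a' (2 * n - 1) - a' (2 * n - 2))
    (ha'odd : ∀ n : ℤ, a' (2 * n + 1) = l * a' (2 * n) - a' (2 * n - 1)) :
    ∀ n m : ℤ, a' (2 * n - 1) * a m - a (2 * n) * a' (m - 1) = a (2 * n - m) :=
  kl_seq_cross_even_general k l a a' ha0 ha1 haeven haodd ha'0 ha'1 ha'even ha'odd
end

section
/- For integers k,l ≥ 1 with kl ≥ 4 and all integers n,m, the (k,l)-sequence satisfies the cross identity a^{(k,l)}_{2n}·a^{(l,k)}_{m+1} − a^{(l,k)}_{2n+1}·a^{(k,l)}_m = a^{(k,l)}_{2n-m}. -/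
/-!
Both sequences solve a three-term recurrence `x (j + 1) + x (j - 1) = c j * x j`, with
`c j = k` for even `j` and `c j = l` for odd `j` in the `(k,l)` case; the `(l,k)` coefficient is
the same one shifted by one. Hence, for fixed `n`, both sides of the identity solve the `(k,l)`
recurrence in `m`, and a solution is determined by two consecutive values. At `m = 0` they agree
trivially; at `m = 1` agreement amounts to `a' (2n+1) = a (2n+1)`. Odd-indexed terms of both
sequences solve the same constant-coefficient recurrence with coefficient `kl - 2` and start
from `-1, 1`, so they coincide.
-/

variable {R : Type*} [CommRing R]

def ThreeTermRec (c x : ℤ → R) : Prop :=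
  ∀ j, x (j + 1) + x (j - 1) = c j * x j

namespace ThreeTermRec

variable {c x y : ℤ → R}

theorem eq_of_eq_zero_of_eq_one (hx : ThreeTermRec c x) (hy : ThreeTermRec c y)
    (h0 : x 0 = y 0) (h1 : x 1 = y 1) : x = y := by
  suffices h : ∀ j, x j = y j ∧ x (j + 1) = y (j + 1) from funext fun j => (h j).1
  intro j
  induction j using Int.induction_on with
  | zero => simpa using ⟨h0, h1⟩
  | succ i ih =>
    refine ⟨ih.2, ?_⟩
    have hxi := hx (i + 1)
    have hyi := hy (i + 1)
    simp only [add_sub_cancel_right] at hxi hyi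
    linear_combination hxi - hyi + c (i + 1) * ih.2 - ih.1
  | pred i ih =>
    refine ⟨?_, by simpa using ih.1⟩
    have hxi := hx (-i)
    have hyi := hy (-i)
    linear_combination hxi - hyi + c (-i) * ih.1 - ih.2

theorem mul_sub_mul (hx : ThreeTermRec c x) (hy : ThreeTermRec c y) (α β : R) :
    ThreeTermRec c (fun j => α * x j - β * y j) := fun j => by
  linear_combination α * hx j - β * hy j

theorem comp_add (hx : ThreeTermRec c x) (p : ℤ) :
    ThreeTermRec (fun j => c (j + p)) (fun j => x (j + p)) := fun j => by
  simpa only [add_right_comm, sub_add_eq_add_sub] using hx (j + p)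

theorem comp_sub (hx : ThreeTermRec c x) (p : ℤ) :
    ThreeTermRec (fun j => c (p - j)) (fun j => x (p - j)) := fun j => by
  have h := hx (p - j)
  rw [sub_add] at h
  simp only [← sub_sub p j 1]
  linear_combination h

theorem neg_one_eq (hx : ThreeTermRec c x) (h0 : x 0 = 0) : x (-1) = -x 1 := by
  linear_combination (by simpa [h0] using hx 0 : x 1 + x (-1) = 0)

theorem comp_two_mul_add (hx : ThreeTermRec c x) (hc : Function.Periodic c 2) (r : ℤ) :
    ThreeTermRec (fun j => c (2 * j + r + 1) * c (2 * j + r) - 2) (fun j => x (2 * j + r)) :=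
  fun j => by
    -- Eliminate the neighbours `x (2j+r±1)` of `x (2j+r)`, whose coefficients agree by periodicity.
    have hup := hx (2 * j + r + 1)
    have hmid := hx (2 * j + r)
    have hdown := hx (2 * j + r - 1)
    have hper : c (2 * j + r - 1) = c (2 * j + r + 1) := by
      rw [← hc (2 * j + r - 1)]
      ring_nf
    rw [hper] at hdown
    simp only [add_sub_cancel_right, sub_add_cancel] at hup hdown
    ring_nf at hup hmid hdown ⊢
    linear_combination hup + hdown + c (1 + j * 2 + r) * hmid

end ThreeTermRec

section klCoeff

variable {α : Type*} (k l : α)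

def klCoeff (j : ℤ) : α := if Even j then k else l

theorem klCoeff_periodic : Function.Periodic (klCoeff k l) 2 := fun j => by
  simp [klCoeff]

theorem klCoeff_add_one (j : ℤ) : klCoeff l k (j + 1) = klCoeff k l j := by
  by_cases h : Even j <;> simp [klCoeff, h]

theorem klCoeff_two_mul_sub (n j : ℤ) : klCoeff k l (2 * n - j) = klCoeff k l j := by
  simp [klCoeff, Int.even_sub]

theorem klCoeff_two_mul (j : ℤ) : klCoeff k l (2 * j) = k := by
  simp [klCoeff]

theorem klCoeff_two_mul_sub_one (j : ℤ) : klCoeff k l (2 * j - 1) = l := by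
  simp [klCoeff]

end klCoeff

section klRec

variable (k l : R)

theorem threeTermRec_klCoeff {x : ℤ → R}
    (heven : ∀ n : ℤ, x (2 * n) = l * x (2 * n - 1) - x (2 * n - 2))
    (hodd : ∀ n : ℤ, x (2 * n + 1) = k * x (2 * n) - x (2 * n - 1)) :
    ThreeTermRec (klCoeff k l) x := by
  intro j
  obtain ⟨t, rfl | rfl⟩ := Int.even_or_odd' j
  · rw [klCoeff_two_mul, hodd]
    ring
  · have h := heven (t + 1)
    rw [klCoeff, if_neg (Int.not_even_two_mul_add_one t)]
    ring_nf at h ⊢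
    linear_combination h

theorem ThreeTermRec.odd_eq_odd_of_klCoeff {x y : ℤ → R}
    (hx : ThreeTermRec (klCoeff k l) x) (hy : ThreeTermRec (klCoeff l k) y)
    (hx0 : x 0 = 0) (hy0 : y 0 = 0) (h1 : x 1 = y 1) (j : ℤ) :
    x (2 * j + 1) = y (2 * j + 1) := by
  have hcoeff (k l : R) :
      (fun j => klCoeff k l (2 * j + -1 + 1) * klCoeff k l (2 * j + -1) - 2) = fun _ => k * l - 2 :=
    funext fun j => by
      rw [← sub_eq_add_neg, sub_add_cancel, klCoeff_two_mul, klCoeff_two_mul_sub_one]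
  have hxs := hx.comp_two_mul_add (klCoeff_periodic k l) (-1)
  have hys := hy.comp_two_mul_add (klCoeff_periodic l k) (-1)
  rw [hcoeff, mul_comm k l] at hxs
  rw [hcoeff] at hys
  have hodd := hxs.eq_of_eq_zero_of_eq_one hys
    (by simpa [hx.neg_one_eq hx0, hy.neg_one_eq hy0] using h1) (by simpa using h1)
  simpa [mul_add, add_assoc] using congr_fun hodd (j + 1)

end klRec

theorem kl_seq_cross_odd_general
    (k l : ℤ)
    (a a' : ℤ → ℤ)
    (ha0 : a 0 = 0) (ha1 : a 1 = 1)
    (haeven : ∀ n : ℤ, a (2 * n) = l * a (2 * n - 1) - a (2 * n - 2))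
    (haodd : ∀ n : ℤ, a (2 * n + 1) = k * a (2 * n) - a (2 * n - 1))
    (ha'0 : a' 0 = 0) (ha'1 : a' 1 = 1)
    (ha'even : ∀ n : ℤ, a' (2 * n) = k * a' (2 * n - 1) - a' (2 * n - 2))
    (ha'odd : ∀ n : ℤ, a' (2 * n + 1) = l * a' (2 * n) - a' (2 * n - 1)) :
    ∀ n m : ℤ, a (2 * n) * a' (m + 1) - a' (2 * n + 1) * a m = a (2 * n - m) := by
  intro n
  have ha := threeTermRec_klCoeff k l haeven haodd
  have ha' := threeTermRec_klCoeff l k ha'even ha'odd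
  have ha'_shift := ha'.comp_add 1
  simp only [klCoeff_add_one] at ha'_shift
  have hlhs := ha'_shift.mul_sub_mul ha (a (2 * n)) (a' (2 * n + 1))
  have hrhs := ha.comp_sub (2 * n)
  simp only [klCoeff_two_mul_sub] at hrhs
  have hodd_eq := ha.odd_eq_odd_of_klCoeff k l ha' ha0 ha'0 (ha1.trans ha'1.symm) n
  have ha'2 : a' 2 = k := by simpa [ha'0, ha'1, klCoeff] using ha' 1
  have ha_mid := ha (2 * n)
  rw [klCoeff_two_mul] at ha_mid
  refine congr_fun (hlhs.eq_of_eq_zero_of_eq_one hrhs ?_ ?_)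
  · simp [ha0, ha'1]
  · simp only [one_add_one_eq_two, ha1, ha'2, ← hodd_eq]
    linear_combination -ha_mid

/-- second cross identity for the two-sided (k,l)-sequence. -/
theorem kl_seq_cross_odd
    (k l : ℤ) (hk : 1 ≤ k) (hl : 1 ≤ l) (hkl : 4 ≤ k * l)
    (a a' : ℤ → ℤ)
    (ha0 : a 0 = 0) (ha1 : a 1 = 1)
    (haeven : ∀ n : ℤ, a (2 * n) = l * a (2 * n - 1) - a (2 * n - 2))
    (haodd : ∀ n : ℤ, a (2 * n + 1) = k * a (2 * n) - a (2 * n - 1))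
    (ha'0 : a' 0 = 0) (ha'1 : a' 1 = 1)
    (ha'even : ∀ n : ℤ, a' (2 * n) = k * a' (2 * n - 1) - a' (2 * n - 2))
    (ha'odd : ∀ n : ℤ, a' (2 * n + 1) = l * a' (2 * n) - a' (2 * n - 1)) :
    ∀ n m : ℤ, a (2 * n) * a' (m + 1) - a' (2 * n + 1) * a m = a (2 * n - m) :=
  kl_seq_cross_odd_general k l a a' ha0 ha1 haeven haodd ha'0 ha'1 ha'even ha'odd
end

section
/- Let x be a real number with 1/2 ≤ x < 1, and let S⁺ = {(a,b) ∈ ℤ×ℤ : 0 < (1−x)·a − x·b ≤ 1}. Then for (a,b) ∈ ℤ×ℤ, (a,b) ∈ S⁺ if and only if 1 + ⌊xb/(1−x)⌋ ≤ a ≤ 1 + ⌊x(b+1)/(1−x)⌋. Moreover, the map (a,b) ↦ a + b is a bijection from S⁺ to ℤ, with inverse m ↦ (⌊x·m⌋ + 1, ⌈(1−x)·m⌉ − 1). -/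
/-!
Since `(1 - x) * a - x * b = a - x * (a + b)`, a pair `(a, b)` lies in `S⁺` exactly when
`a - 1 ≤ x * (a + b) < a`, i.e. when `a = ⌊x * (a + b)⌋ + 1`. So `a` is determined by `m = a + b`,
and every `m` arises; the formula with `⌈(1 - x) * m⌉` is `m - ⌊x * m⌋` in disguise.
For the description by `a` alone, divide the two defining inequalities by `1 - x > 0`.
-/

def sPlus (x : ℝ) : Set (ℤ × ℤ) :=
  {p | 0 < (1 - x) * p.1 - x * p.2 ∧ (1 - x) * p.1 - x * p.2 ≤ 1}

section FloorField

variable {K : Type*} [Field K] [LinearOrder K] [IsStrictOrderedRing K] [FloorRing K]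

theorem Int.ceil_intCast_sub_eq (m : ℤ) (t : K) : ⌈(m : K) - t⌉ = m - ⌊t⌋ := by
  rw [sub_eq_neg_add, Int.ceil_add_intCast, Int.ceil_neg]
  ring

theorem Int.floor_div_lt_iff {c : K} (hc : 0 < c) (y : K) (a : ℤ) :
    ⌊y / c⌋ < a ↔ y < c * a := by
  rw [Int.floor_lt, div_lt_iff₀ hc, mul_comm]

theorem Int.le_floor_div_iff {c : K} (hc : 0 < c) (y : K) (a : ℤ) :
    a ≤ ⌊y / c⌋ ↔ c * a ≤ y := by
  rw [Int.le_floor, le_div_iff₀ hc, mul_comm]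

end FloorField

theorem mem_sPlus_iff_bounds {x : ℝ} (hx : x < 1) (a b : ℤ) :
    (a, b) ∈ sPlus x ↔ 1 + ⌊x * b / (1 - x)⌋ ≤ a ∧ a ≤ 1 + ⌊x * (b + 1) / (1 - x)⌋ := by
  have hc : 0 < 1 - x := sub_pos.2 hx
  have hlower : 1 + ⌊x * b / (1 - x)⌋ ≤ a ↔ x * b < (1 - x) * a := by
    rw [← Int.floor_div_lt_iff hc]
    omega
  have hupper : a ≤ 1 + ⌊x * (b + 1) / (1 - x)⌋ ↔ (1 - x) * (a - 1 : ℤ) ≤ x * (b + 1) := by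
    rw [← Int.le_floor_div_iff hc]
    omega
  rw [hlower, hupper, sPlus, Set.mem_ofPred_eq]
  push_cast
  constructor <;> rintro ⟨h₁, h₂⟩ <;> constructor <;> linarith

theorem mem_sPlus_iff_eq_floor_add_one (x : ℝ) (p : ℤ × ℤ) :
    p ∈ sPlus x ↔ p.1 = ⌊x * (p.1 + p.2 : ℤ)⌋ + 1 := by
  have hrewrite : (1 - x) * p.1 - x * p.2 = p.1 - x * (p.1 + p.2 : ℤ) := by push_cast; ring
  rw [sPlus, Set.mem_ofPred_eq, hrewrite, eq_comm, ← eq_sub_iff_add_eq, Int.floor_eq_iff]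
  push_cast
  constructor <;> rintro ⟨h₁, h₂⟩ <;> constructor <;> linarith

noncomputable def sPlusEquivInt (x : ℝ) : sPlus x ≃ ℤ where
  toFun p := p.1.1 + p.1.2
  invFun m := ⟨(⌊x * m⌋ + 1, m - ⌊x * m⌋ - 1), by
    rw [mem_sPlus_iff_eq_floor_add_one]
    ring_nf⟩
  left_inv := by
    rintro ⟨p, hp⟩
    have hp' := (mem_sPlus_iff_eq_floor_add_one x p).1 hp
    ext <;> simp only <;> omega
  right_inv m := by
    simp only
    ring

theorem divide_and_conquer_plus_general
    (x : ℝ) (hx2 : x < 1) :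
    (∀ a b : ℤ,
      (0 < (1 - x) * a - x * b ∧ (1 - x) * a - x * b ≤ 1) ↔
        (1 + ⌊x * b / (1 - x)⌋ ≤ a ∧ a ≤ 1 + ⌊x * (b + 1) / (1 - x)⌋)) ∧
    ∃ e : {p : ℤ × ℤ // 0 < (1 - x) * p.1 - x * p.2 ∧ (1 - x) * p.1 - x * p.2 ≤ 1} ≃ ℤ,
      (∀ p, e p = p.1.1 + p.1.2) ∧
      (∀ m : ℤ, ((e.symm m : ℤ × ℤ) = (⌊x * m⌋ + 1, ⌈(1 - x) * m⌉ - 1))) := by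
  refine ⟨mem_sPlus_iff_bounds hx2, sPlusEquivInt x, fun _ => rfl, fun m => ?_⟩
  have hceil : ⌈(1 - x) * m⌉ = m - ⌊x * m⌋ := by
    rw [one_sub_mul, Int.ceil_intCast_sub_eq]
  change (_, _) = (_, _)
  rw [hceil]

/-- the set S⁺ and its bijection with ℤ. -/
theorem divide_and_conquer_plus
    (x : ℝ) (hx1 : 1 / 2 ≤ x) (hx2 : x < 1) :
    (∀ a b : ℤ,
      (0 < (1 - x) * a - x * b ∧ (1 - x) * a - x * b ≤ 1) ↔
        (1 + ⌊x * b / (1 - x)⌋ ≤ a ∧ a ≤ 1 + ⌊x * (b + 1) / (1 - x)⌋)) ∧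
    ∃ e : {p : ℤ × ℤ // 0 < (1 - x) * p.1 - x * p.2 ∧ (1 - x) * p.1 - x * p.2 ≤ 1} ≃ ℤ,
      (∀ p, e p = p.1.1 + p.1.2) ∧
      (∀ m : ℤ, ((e.symm m : ℤ × ℤ) = (⌊x * m⌋ + 1, ⌈(1 - x) * m⌉ - 1))) :=
  divide_and_conquer_plus_general x hx2
end

section
/- Let x be a real number with 1/2 ≤ x < 1, and let S⁻ = {(a,b) ∈ ℤ×ℤ : 0 ≤ (1−x)·a − x·b < 1}. Then for (a,b) ∈ ℤ×ℤ, (a,b) ∈ S⁻ if and only if ⌈xb/(1−x)⌉ ≤ a ≤ ⌈x(b+1)/(1−x)⌉. Moreover, the map (a,b) ↦ a + b is a bijection from S⁻ to ℤ, with inverse m ↦ (⌈x·m⌉, ⌊(1−x)·m⌋). -/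
/-! Writing `(1 - x) a - x b = a - x (a + b)`, membership of `(a, b)` in `S⁻` says exactly that
`⌈x (a + b)⌉ = a`. Hence `(a, b)` is recovered from `m = a + b` as `(⌈x m⌉, m - ⌈x m⌉)`, and
`m - ⌈x m⌉ = ⌊(1 - x) m⌋`. The description of `S⁻` by ceilings is the same two inequalities divided
by `1 - x > 0`. -/

namespace Int

variable {α : Type*} [Field α] [LinearOrder α] [IsStrictOrderedRing α] [FloorRing α]

theorem ceil_div_le_iff {y t : α} (ht : 0 < t) (a : ℤ) : ⌈y / t⌉ ≤ a ↔ y ≤ t * a := by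
  rw [ceil_le, div_le_iff₀ ht, mul_comm]

theorem le_ceil_div_iff {y t : α} (ht : 0 < t) (a : ℤ) : a ≤ ⌈y / t⌉ ↔ t * (a - 1) < y := by
  rw [le_ceil_iff, lt_div_iff₀ ht, mul_comm]

end Int

section

variable {α : Type*} [Ring α] [LinearOrder α] [IsStrictOrderedRing α] [FloorRing α]

theorem Int.floor_one_sub_mul_intCast (x : α) (m : ℤ) : ⌊(1 - x) * m⌋ = m - ⌈x * m⌉ := by
  rw [sub_mul, one_mul, sub_eq_add_neg, floor_intCast_add, floor_neg, ← sub_eq_add_neg]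

theorem Int.ceil_eq_iff_sub_mem_Ico (y : α) (a : ℤ) : ⌈y⌉ = a ↔ 0 ≤ a - y ∧ a - y < 1 := by
  rw [ceil_eq_iff, sub_nonneg, sub_lt_comm, and_comm]

def ceilSplitEquiv (x : α) : {p : ℤ × ℤ // ⌈x * (p.1 + p.2)⌉ = p.1} ≃ ℤ where
  toFun p := p.1.1 + p.1.2
  invFun m := ⟨(⌈x * m⌉, m - ⌈x * m⌉), by simp⟩
  left_inv := by
    rintro ⟨⟨a, b⟩, h : ⌈x * (a + b)⌉ = a⟩
    ext <;> simp [h]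
  right_inv m := by simp

end

theorem divide_and_conquer_minus_general
    (x : ℝ) (hx2 : x < 1) :
    (∀ a b : ℤ,
      (0 ≤ (1 - x) * a - x * b ∧ (1 - x) * a - x * b < 1) ↔
        (⌈x * b / (1 - x)⌉ ≤ a ∧ a ≤ ⌈x * (b + 1) / (1 - x)⌉)) ∧
    ∃ e : {p : ℤ × ℤ // 0 ≤ (1 - x) * p.1 - x * p.2 ∧ (1 - x) * p.1 - x * p.2 < 1} ≃ ℤ,
      (∀ p, e p = p.1.1 + p.1.2) ∧
      (∀ m : ℤ, ((e.symm m : ℤ × ℤ) = (⌈x * m⌉, ⌊(1 - x) * m⌋))) := by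
  have ht : 0 < 1 - x := sub_pos.mpr hx2
  have hS : ∀ p : ℤ × ℤ, (0 ≤ (1 - x) * p.1 - x * p.2 ∧ (1 - x) * p.1 - x * p.2 < 1) ↔
      ⌈x * (p.1 + p.2)⌉ = p.1 := by
    intro p
    rw [Int.ceil_eq_iff_sub_mem_Ico, show (1 - x) * p.1 - x * p.2 = p.1 - x * (p.1 + p.2) by ring]
  refine ⟨fun a b => ?_, (Equiv.subtypeEquivRight hS).trans (ceilSplitEquiv x), fun _ => rfl,
    fun m => ?_⟩
  · rw [Int.ceil_div_le_iff ht, Int.le_ceil_div_iff ht]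
    constructor <;> rintro ⟨h₁, h₂⟩ <;> constructor <;> linarith
  · simp [ceilSplitEquiv, Int.floor_one_sub_mul_intCast]

/-- the set S⁻ and its bijection with ℤ. -/
theorem divide_and_conquer_minus
    (x : ℝ) (hx1 : 1 / 2 ≤ x) (hx2 : x < 1) :
    (∀ a b : ℤ,
      (0 ≤ (1 - x) * a - x * b ∧ (1 - x) * a - x * b < 1) ↔
        (⌈x * b / (1 - x)⌉ ≤ a ∧ a ≤ ⌈x * (b + 1) / (1 - x)⌉)) ∧
    ∃ e : {p : ℤ × ℤ // 0 ≤ (1 - x) * p.1 - x * p.2 ∧ (1 - x) * p.1 - x * p.2 < 1} ≃ ℤ,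
      (∀ p, e p = p.1.1 + p.1.2) ∧
      (∀ m : ℤ, ((e.symm m : ℤ × ℤ) = (⌈x * m⌉, ⌊(1 - x) * m⌋))) :=
  divide_and_conquer_minus_general x hx2
end

section
/- Let x be a real number with 1/2 ≤ x < 1 and let (a,b) be integers. Then x < (1−x)·a − x·b ≤ 1 if and only if a = 1 + ⌊x(b+1)/(1−x)⌋; and x ≤ (1−x)·a − x·b < 1 if and only if a = ⌈x(b+1)/(1−x)⌉. -/
section FloorDiv

variable {K : Type*} [Field K] [LinearOrder K] [IsStrictOrderedRing K] [FloorRing K]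
  {c : K} (hc : 0 < c) (t : K) (n : ℤ)

include hc

theorem Int.eq_one_add_floor_div_iff : n = 1 + ⌊t / c⌋ ↔ t < c * n ∧ c * n ≤ t + c := by
  rw [show n = 1 + ⌊t / c⌋ ↔ ⌊t / c⌋ = n - 1 by omega, Int.floor_eq_iff, le_div_iff₀ hc,
    div_lt_iff₀ hc]
  push_cast
  constructor <;> rintro ⟨h₁, h₂⟩ <;> constructor <;> linarith

theorem Int.eq_ceil_div_iff : n = ⌈t / c⌉ ↔ t ≤ c * n ∧ c * n < t + c := by
  rw [eq_comm, Int.ceil_eq_iff, lt_div_iff₀ hc, div_le_iff₀ hc]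
  constructor <;> rintro ⟨h₁, h₂⟩ <;> constructor <;> linarith

end FloorDiv

theorem divide_and_conquer_extreme_general
    (x : ℝ) (hx2 : x < 1) (a b : ℤ) :
    ((x < (1 - x) * a - x * b ∧ (1 - x) * a - x * b ≤ 1) ↔
      a = 1 + ⌊x * (b + 1) / (1 - x)⌋) ∧
    ((x ≤ (1 - x) * a - x * b ∧ (1 - x) * a - x * b < 1) ↔
      a = ⌈x * (b + 1) / (1 - x)⌉) := by
  have hc : 0 < 1 - x := sub_pos.mpr hx2
  rw [Int.eq_one_add_floor_div_iff hc, Int.eq_ceil_div_iff hc]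
  constructor <;> constructor <;> rintro ⟨h₁, h₂⟩ <;> constructor <;> linarith

/-- characterizations of the extreme elements of S⁺ and S⁻. -/
theorem divide_and_conquer_extreme
    (x : ℝ) (hx1 : 1 / 2 ≤ x) (hx2 : x < 1) (a b : ℤ) :
    ((x < (1 - x) * a - x * b ∧ (1 - x) * a - x * b ≤ 1) ↔
      a = 1 + ⌊x * (b + 1) / (1 - x)⌋) ∧
    ((x ≤ (1 - x) * a - x * b ∧ (1 - x) * a - x * b < 1) ↔
      a = ⌈x * (b + 1) / (1 - x)⌉) :=
  divide_and_conquer_extreme_general x hx2 a b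
end
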